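/- Let μ = (μ₁,…,μ_r) be a partition of n with all parts μ_j odd. Then the sum over i = 0,…,n−1 of the irreducible character χ^{(n−i,1^i)} of S_n (indexed by the hook partitions of n) evaluated at a permutation of cycle type μ equals 2^{r−1}, where r = ℓ(μ) is the number of parts of μ. -/

import Mathlib

open MvPolynomial Finset

/-- The `i`-th part (0-indexed) of a partition given by its multiset of parts,
read off from the decreasingly sorted list of parts (0 if out of range). -/
def partNth (p : Multiset ℕ) (i : ℕ) : ℕ := (p.sort (· ≥ ·)).getD i 0

/-- The product of power sums `p_μ = ∏_j (x_1^{μ_j} + ⋯ + x_n^{μ_j})` in `n` variables. -/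
noncomputable def powerSumProd (n : ℕ) (mu : Multiset ℕ) : MvPolynomial (Fin n) ℤ :=
  (mu.map fun m => ∑ i : Fin n, (X i) ^ m).prod

/-- The Vandermonde product `∏_{i<j} (x_i - x_j)`. -/
noncomputable def vandermondePoly (n : ℕ) : MvPolynomial (Fin n) ℤ :=
  ∏ i : Fin n, ∏ j : Fin n, if i < j then (X i - X j) else 1

/-- The irreducible character `χ^λ(μ)` of `S_n`, defined via the classical formula:
`χ^λ(μ)` is the coefficient of `x^{λ+δ}` (with `δ = (n-1,…,1,0)`) in `a_δ · p_μ`. -/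
noncomputable def chi (n : ℕ) (lam mu : n.Partition) : ℤ :=
  MvPolynomial.coeff
    (Finsupp.equivFunOnFinite.symm fun i : Fin n => partNth lam.parts i.val + (n - 1 - i.val))
    (vandermondePoly n * powerSumProd n mu.parts)

/-- The hook partition `(n-i, 1^i)` of `n`. -/
def hookPartition (n i : ℕ) (h : i < n) : n.Partition where
  parts := (n - i) ::ₘ Multiset.replicate i 1
  parts_pos := by
    intro a ha
    rcases Multiset.mem_cons.mp ha with h1 | h1
    · omega
    · have := Multiset.eq_of_mem_replicate h1; omega
  parts_sum := by
    simp [Multiset.sum_replicate]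
    omega

/-- The cycle type of a permutation of `Fin n`, including the fixed points as parts `1`,
so that it is a partition of `n`. -/
def fullCycleType {n : ℕ} (σ : Equiv.Perm (Fin n)) : Multiset ℕ :=
  σ.cycleType + Multiset.replicate (n - σ.cycleType.sum) 1

/-- The cycle type of `σ ∈ S_n` as a partition of `n`. -/
def permPartition {n : ℕ} (σ : Equiv.Perm (Fin n)) : n.Partition where
  parts := fullCycleType σ
  parts_pos := by
    intro a ha
    rcases Multiset.mem_add.mp ha with h1 | h1
    · have := Equiv.Perm.two_le_of_mem_cycleType h1; omega
    · have := Multiset.eq_of_mem_replicate h1; omega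
  parts_sum := by
    have h1 : σ.cycleType.sum = σ.support.card := Equiv.Perm.sum_cycleType σ
    have h2 : σ.support.card ≤ n := by
      simpa using Finset.card_le_univ σ.support
    simp [fullCycleType, Multiset.sum_replicate]
    omega

/-- The Koszul sign of the action of `σ` on a basis tensor indexed by `f`,
where indices `≥ k` are the odd ones: `(-1)` for each inversion of `σ` at a pair
of odd positions. -/
def koszulSign (k l n : ℕ) (σ : Equiv.Perm (Fin n)) (f : Fin n → Fin (k + l)) : ℤ :=
  (-1) ^ (Finset.univ.filter fun p : Fin n × Fin n =>
      p.1 < p.2 ∧ σ p.2 < σ p.1 ∧ k ≤ (f p.1).val ∧ k ≤ (f p.2).val).card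

/-- The matrix of the super (signed) place-permutation action `φ*_{(k,ℓ),n}(σ)` on
`(V₀ ⊕ V₁)^{⊗n}`, with respect to the basis of homogeneous tensors `e_{f(1)} ⊗ ⋯ ⊗ e_{f(n)}`,
where `e_0,…,e_{k-1}` is a basis of `V₀` and `e_k,…,e_{k+ℓ-1}` a basis of `V₁`:
`σ` sends `e_f` to `koszulSign ⋅ e_{f ∘ σ⁻¹}`. -/
def superPermMatrix (k l n : ℕ) (σ : Equiv.Perm (Fin n)) :
    Matrix (Fin n → Fin (k + l)) (Fin n → Fin (k + l)) ℤ :=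
  fun g f => if g = f ∘ σ.symm then koszulSign k l n σ f else 0

/-- The number `s_{k,ℓ}(λ)` of `(k,ℓ)` semistandard tableaux of a given shape:
fillings by the alphabet `1 < ⋯ < k < 1' < ⋯ < ℓ'` (encoded as `Fin (k+ℓ)`,
with the primed/odd letters being those `≥ k`), weakly increasing along rows and columns,
strict along rows for primed letters and strict along columns for unprimed letters. -/
noncomputable def sSuper (k l : ℕ) (Y : YoungDiagram) : ℕ :=
  Nat.card {T : Y.cells → Fin (k + l) //
    (∀ c d : Y.cells, (c : ℕ × ℕ).1 = (d : ℕ × ℕ).1 → (d : ℕ × ℕ).2 = (c : ℕ × ℕ).2 + 1 →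
        T c ≤ T d) ∧
    (∀ c d : Y.cells, (c : ℕ × ℕ).1 = (d : ℕ × ℕ).1 → (d : ℕ × ℕ).2 = (c : ℕ × ℕ).2 + 1 →
        k ≤ (T c).val → T c < T d) ∧
    (∀ c d : Y.cells, (d : ℕ × ℕ).1 = (c : ℕ × ℕ).1 + 1 → (c : ℕ × ℕ).2 = (d : ℕ × ℕ).2 →
        T c ≤ T d) ∧
    (∀ c d : Y.cells, (d : ℕ × ℕ).1 = (c : ℕ × ℕ).1 + 1 → (c : ℕ × ℕ).2 = (d : ℕ × ℕ).2 →
        (T c).val < k → T c < T d)}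

/-- The Young diagram of a partition. -/
def toYoung {n : ℕ} (lam : n.Partition) : YoungDiagram :=
  YoungDiagram.ofRowLens (lam.parts.sort (· ≥ ·)) (List.Pairwise.sortedGE (Multiset.pairwise_sort _ _))

section Work
variable {n : ℕ}


/-- Finsupp from a function on `Fin n`. -/
private noncomputable def fs (h : Fin n → ℕ) : Fin n →₀ ℕ := Finsupp.equivFunOnFinite.symm h

@[simp] private lemma fs_apply (h : Fin n → ℕ) (v : Fin n) : fs h v = h v :=
  rfl

/-- The exponent vector `δ + hook(k-i, 1^i)` (hook of size `k`). -/
private noncomputable def gv (n k i : ℕ) : Fin n →₀ ℕ :=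
  fs fun v => (n - 1 - (v : ℕ)) + (if (v : ℕ) = 0 then k - i else if (v : ℕ) ≤ i then 1 else 0)

private lemma gv_apply (k i : ℕ) (v : Fin n) :
    gv n k i v = (n - 1 - (v : ℕ)) + (if (v : ℕ) = 0 then k - i else if (v : ℕ) ≤ i then 1 else 0) := by
  simp [gv]

/-- Antisymmetry of a polynomial under variable permutations. -/
private def Antisym (F : MvPolynomial (Fin n) ℤ) : Prop :=
  ∀ σ : Equiv.Perm (Fin n), rename (⇑σ) F = (Equiv.Perm.sign σ : ℤ) • F

private lemma antisym_coeff {F : MvPolynomial (Fin n) ℤ} (hF : Antisym F)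
    (σ : Equiv.Perm (Fin n)) (d e : Fin n →₀ ℕ) (h : ∀ x, e (σ x) = d x) :
    coeff e F = (Equiv.Perm.sign σ : ℤ) * coeff d F := by
  have hmap : Finsupp.mapDomain (⇑σ) d = e := by
    rw [← Finsupp.equivMapDomain_eq_mapDomain]
    ext y
    rw [Finsupp.equivMapDomain_apply]
    have := h (σ.symm y)
    simpa using this.symm
  have h1 := MvPolynomial.coeff_rename_mapDomain (⇑σ) σ.injective F d
  rw [hmap, hF σ, MvPolynomial.coeff_smul] at h1
  rcases Int.units_eq_one_or (Equiv.Perm.sign σ) with hs | hs <;>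
    simp [hs] at h1 ⊢ <;> omega
  
private lemma antisym_coeff_zero {F : MvPolynomial (Fin n) ℤ} (hF : Antisym F)
    {a b : Fin n} (hab : a ≠ b) {d : Fin n →₀ ℕ} (h : d a = d b) :
    coeff d F = 0 := by
  have key := antisym_coeff hF (Equiv.swap a b) d d (fun x => by
    rcases eq_or_ne x a with rfl | hxa
    · rw [Equiv.swap_apply_left, h]
    rcases eq_or_ne x b with rfl | hxb
    · rw [Equiv.swap_apply_right, h]
    · rw [Equiv.swap_apply_of_ne_of_ne hxa hxb])
  rw [Equiv.Perm.sign_swap hab] at key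
  simp at key
  omega



private noncomputable def psumN (n m : ℕ) : MvPolynomial (Fin n) ℤ := ∑ v : Fin n, X v ^ m


private lemma vand_eq :
    vandermondePoly n = (∏ i : Fin n, (-1 : MvPolynomial (Fin n) ℤ) ^ (Ioi i).card) *
      (Matrix.vandermonde fun i : Fin n => (X i : MvPolynomial (Fin n) ℤ)).det := by
  rw [Matrix.det_vandermonde, vandermondePoly, ← Finset.prod_mul_distrib]
  apply Finset.prod_congr rfl
  intro i _
  have h1 : ∀ j : Fin n, (if i < j then (X i - X j : MvPolynomial (Fin n) ℤ) else 1)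
      = if i < j then (X i - X j) else 1 := fun _ => rfl
  have : (∏ j : Fin n, if i < j then (X i - X j : MvPolynomial (Fin n) ℤ) else 1)
      = ∏ j ∈ Ioi i, (X i - X j) := by
    have hIoi : Ioi i = univ.filter (fun j => i < j) := by ext j; simp
    rw [hIoi, Finset.prod_filter]
  rw [this, ← Finset.prod_const, ← Finset.prod_mul_distrib]
  apply Finset.prod_congr rfl
  intro j _
  ring

private lemma antisym_vand : Antisym (vandermondePoly n) := by
  intro σ
  rw [vand_eq]
  have hu : (rename ⇑σ) (∏ i : Fin n, (-1 : MvPolynomial (Fin n) ℤ) ^ (Ioi i).card)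
      = ∏ i : Fin n, (-1 : MvPolynomial (Fin n) ℤ) ^ (Ioi i).card := by
    simp [map_prod]
  have hdet : (rename (⇑σ)) (Matrix.vandermonde fun i : Fin n => (X i : MvPolynomial (Fin n) ℤ)).det
      = (Equiv.Perm.sign σ : ℤ) •
        (Matrix.vandermonde fun i : Fin n => (X i : MvPolynomial (Fin n) ℤ)).det := by
    have h1 := RingHom.map_det ((rename (⇑σ) : MvPolynomial (Fin n) ℤ →ₐ[ℤ] MvPolynomial (Fin n) ℤ) :
        MvPolynomial (Fin n) ℤ →+* MvPolynomial (Fin n) ℤ)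
      (Matrix.vandermonde fun i : Fin n => (X i : MvPolynomial (Fin n) ℤ))
    have h2 : ((Matrix.vandermonde fun i : Fin n => (X i : MvPolynomial (Fin n) ℤ)).map
        (↑(rename (⇑σ) : MvPolynomial (Fin n) ℤ →ₐ[ℤ] MvPolynomial (Fin n) ℤ) :
          MvPolynomial (Fin n) ℤ →+* MvPolynomial (Fin n) ℤ))
        = (Matrix.vandermonde fun i : Fin n => (X i : MvPolynomial (Fin n) ℤ)).submatrix (⇑σ) id := by
      ext i j
      simp [Matrix.vandermonde, Matrix.map_apply, Matrix.submatrix_apply, map_pow]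
    rw [RingHom.mapMatrix_apply, h2, Matrix.det_permute] at h1
    rw [show ((rename (⇑σ)) (Matrix.vandermonde fun i : Fin n => (X i : MvPolynomial (Fin n) ℤ)).det)
      = ((rename (⇑σ) : MvPolynomial (Fin n) ℤ →ₐ[ℤ] MvPolynomial (Fin n) ℤ) :
        MvPolynomial (Fin n) ℤ →+* MvPolynomial (Fin n) ℤ)
        (Matrix.vandermonde fun i : Fin n => (X i : MvPolynomial (Fin n) ℤ)).det from rfl, h1]
    rcases Int.units_eq_one_or (Equiv.Perm.sign σ) with hs | hs <;> simp [hs]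
  rw [map_mul, hu, hdet, mul_smul_comm]

private lemma rename_psumN (m : ℕ) (σ : Equiv.Perm (Fin n)) :
    (rename (⇑σ)) (psumN n m) = psumN n m := by
  rw [psumN, map_sum]
  simp only [map_pow, rename_X]
  exact Fintype.sum_equiv σ _ _ (fun v => rfl)

private lemma rename_powerSumProd (μ : Multiset ℕ) (σ : Equiv.Perm (Fin n)) :
    (rename (⇑σ)) (powerSumProd n μ) = powerSumProd n μ := by
  rw [powerSumProd, map_multiset_prod, Multiset.map_map]
  congr 1
  apply Multiset.map_congr rfl
  intro m _
  exact rename_psumN m σ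

private lemma antisym_mul {F G : MvPolynomial (Fin n) ℤ} (hF : Antisym F)
    (hG : ∀ σ : Equiv.Perm (Fin n), rename (⇑σ) G = G) : Antisym (F * G) := by
  intro σ
  rw [map_mul, hF σ, hG σ, smul_mul_assoc]


private noncomputable def insVec (n : ℕ) (dec : ℕ → ℕ) (w j : ℕ) : Fin n →₀ ℕ :=
  fs fun v => if (v : ℕ) < j then dec v else if (v : ℕ) = j then w else dec ((v : ℕ) - 1)

private lemma insVec_swap {F : MvPolynomial (Fin n) ℤ} (hF : Antisym F) (dec : ℕ → ℕ)
    (w j : ℕ) (hj : j + 1 < n) :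
    coeff (insVec n dec w j) F = - coeff (insVec n dec w (j+1)) F := by
  have hne : (⟨j, by omega⟩ : Fin n) ≠ ⟨j+1, hj⟩ := by
    simp [Fin.ext_iff]
  have key := antisym_coeff hF (Equiv.swap ⟨j, by omega⟩ ⟨j+1, hj⟩)
    (insVec n dec w (j+1)) (insVec n dec w j) ?_
  · rw [Equiv.Perm.sign_swap hne] at key
    simpa using key
  · intro x
    rcases eq_or_ne x ⟨j, by omega⟩ with rfl | hxa
    · rw [Equiv.swap_apply_left]
      simp [insVec]
    rcases eq_or_ne x ⟨j+1, hj⟩ with rfl | hxb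
    · rw [Equiv.swap_apply_right]
      simp [insVec]
    · rw [Equiv.swap_apply_of_ne_of_ne hxa hxb]
      have h1 : (x : ℕ) ≠ j := fun h => hxa (Fin.ext h)
      have h2 : (x : ℕ) ≠ j + 1 := fun h => hxb (Fin.ext h)
      simp only [insVec, fs_apply]
      split_ifs <;> first | rfl | omega | (congr 1; omega)

private lemma rot {F : MvPolynomial (Fin n) ℤ} (hF : Antisym F) (dec : ℕ → ℕ) (w : ℕ) :
    ∀ (N a c : ℕ), a + N = c → c < n →
      coeff (insVec n dec w a) F = (-1 : ℤ)^N * coeff (insVec n dec w c) F := by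
  intro N
  induction N with
  | zero =>
    intro a c h hc
    subst h
    simp
  | succ N ih =>
    intro a c h hc
    have h1 : coeff (insVec n dec w a) F = - coeff (insVec n dec w (a+1)) F :=
      insVec_swap hF dec w a (by omega)
    rw [h1, ih (a+1) c (by omega) hc]
    ring

private lemma coeff_mul_psumN (F : MvPolynomial (Fin n) ℤ) (d : Fin n →₀ ℕ) (m : ℕ) :
    coeff d (F * psumN n m)
      = ∑ v : Fin n, if m ≤ d v then coeff (d - Finsupp.single v m) F else 0 := by
  rw [psumN, Finset.mul_sum, MvPolynomial.coeff_sum]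
  apply Finset.sum_congr rfl
  intro v _
  rw [MvPolynomial.X_pow_eq_monomial, MvPolynomial.coeff_mul_monomial']
  simp [Finsupp.single_le_iff]


private lemma gv_sub_apply (k i m : ℕ) (v x : Fin n) :
    (gv n k i - Finsupp.single v m) x
      = (n - 1 - (x : ℕ)) + (if (x : ℕ) = 0 then k - i else if (x : ℕ) ≤ i then 1 else 0)
        - (if v = x then m else 0) := by
  rw [Finsupp.tsub_apply, Finsupp.single_apply, gv_apply]

private lemma term_vanish {F : MvPolynomial (Fin n) ℤ} (hF : Antisym F) {m k i : ℕ}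
    (hm : 0 < m) (hik : i < k) (hkn : k ≤ n) (v : Fin n) (hv : 1 ≤ (v : ℕ))
    (hnot : ¬((v : ℕ) = i - m + 1 ∧ m ≤ i)) (hle : m ≤ gv n k i v) :
    coeff (gv n k i - Finsupp.single v m) F = 0 := by
  have hvn := v.isLt
  rw [gv_apply] at hle
  have hcases : ((v : ℕ) ≤ i ∧ m + (v : ℕ) ≤ n) ∨ (i < (v : ℕ) ∧ m + (v : ℕ) + 1 ≤ n) := by
    split_ifs at hle <;> first | contradiction | omega
  obtain ⟨w, hwn, hw0, hwv, hval⟩ :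
      ∃ w : ℕ, w < n ∧ w ≠ 0 ∧ w ≠ (v : ℕ) ∧
        ((n - 1 - w) + (if w = 0 then k - i else if w ≤ i then 1 else 0)
          = (n - 1 - (v : ℕ)) + (if (v : ℕ) = 0 then k - i else if (v : ℕ) ≤ i then 1 else 0) - m) := by
    rcases hcases with ⟨hai, hmn⟩ | ⟨hai, hmn⟩
    · by_cases hc1 : (v : ℕ) + m ≤ i
      · refine ⟨(v : ℕ) + m, by omega, by omega, by omega, ?_⟩
        split_ifs <;> first | contradiction | omega
      · have h2 : i + 2 ≤ (v : ℕ) + m := by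
          by_cases hmi : m ≤ i
          · have : (v : ℕ) ≠ i - m + 1 := fun h => hnot ⟨h, hmi⟩
            omega
          · omega
        refine ⟨(v : ℕ) + m - 1, by omega, by omega, by omega, ?_⟩
        split_ifs <;> first | contradiction | omega
    · refine ⟨(v : ℕ) + m, by omega, by omega, by omega, ?_⟩
      split_ifs <;> first | contradiction | omega
  have hne : (⟨w, hwn⟩ : Fin n) ≠ v := by
    simp only [Fin.ext_iff, ne_eq, Fin.val_mk]
    exact hwv
  apply antisym_coeff_zero hF hne
  have hvne : v ≠ (⟨w, hwn⟩ : Fin n) := fun h => hwv (by rw [h])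
  rw [gv_sub_apply, gv_sub_apply, if_neg hvne, if_pos rfl]
  simpa using hval

private lemma gv_v0_le {m k i : ℕ} (hn : 0 < n) (hm0 : 0 < m) (hmk : m ≤ k) (hik : i < k)
    (hkn : k ≤ n) : m ≤ gv n k i ⟨0, hn⟩ := by
  rw [gv_apply]
  have h0 : ((⟨0, hn⟩ : Fin n) : ℕ) = 0 := rfl
  rw [h0]
  split_ifs <;> first | contradiction | omega

private lemma term_v0_big {m k i : ℕ} (hn : 0 < n) (hik : i < k) (hkn : k ≤ n)
    (him : i + m < k) :
    gv n k i - Finsupp.single (⟨0, hn⟩ : Fin n) m = gv n (k - m) i := by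
  ext x
  rw [gv_sub_apply, gv_apply]
  simp only [Fin.ext_iff, Fin.val_mk]
  split_ifs <;> first | contradiction | omega

private lemma term_v0_collide {F : MvPolynomial (Fin n) ℤ} (hF : Antisym F) {m k i : ℕ}
    (hn : 0 < n) (hmk : m < k) (hik : i < k) (hkn : k ≤ n) (him : k ≤ i + m) :
    coeff (gv n k i - Finsupp.single (⟨0, hn⟩ : Fin n) m) F = 0 := by
  have hw : i + m - k + 1 < n := by omega
  have hne : (⟨i + m - k + 1, hw⟩ : Fin n) ≠ (⟨0, hn⟩ : Fin n) := by
    simp [Fin.ext_iff]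
  apply antisym_coeff_zero hF hne
  rw [gv_sub_apply, gv_sub_apply]
  have h1 : (⟨0, hn⟩ : Fin n) ≠ (⟨i + m - k + 1, hw⟩ : Fin n) := hne.symm
  rw [if_neg h1, if_pos rfl]
  have e1 : ((⟨i + m - k + 1, hw⟩ : Fin n) : ℕ) = i + m - k + 1 := rfl
  have e2 : ((⟨0, hn⟩ : Fin n) : ℕ) = 0 := rfl
  rw [e1, e2]
  split_ifs <;> first | contradiction | omega

private lemma term_v0_base {F : MvPolynomial (Fin n) ℤ} (hF : Antisym F) {m i : ℕ}
    (hn : 0 < n) (him : i < m) (hmn : m ≤ n) :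
    coeff (gv n m i - Finsupp.single (⟨0, hn⟩ : Fin n) m) F
      = (-1 : ℤ)^i * coeff (gv n 0 0) F := by
  have h1 : gv n m i - Finsupp.single (⟨0, hn⟩ : Fin n) m
      = insVec n (fun u => if u + 1 ≤ i then n - 1 - u else n - 2 - u) (n - 1 - i) 0 := by
    ext x
    rw [gv_sub_apply]
    simp only [insVec, fs_apply, Fin.ext_iff, Fin.val_mk]
    split_ifs <;> first | contradiction | omega
  have h2 : gv n 0 0
      = insVec n (fun u => if u + 1 ≤ i then n - 1 - u else n - 2 - u) (n - 1 - i) i := by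
    ext x
    rw [gv_apply]
    simp only [insVec, fs_apply]
    split_ifs <;> first | contradiction | omega
  rw [h1, h2]
  exact rot hF _ _ i 0 i (by omega) (by omega)

private lemma term_mid {F : MvPolynomial (Fin n) ℤ} (hF : Antisym F) {m k i : ℕ}
    (hm : Odd m) (hmi : m ≤ i) (hik : i < k) (hkn : k ≤ n) (hwlt : i - m + 1 < n) :
    coeff (gv n k i - Finsupp.single (⟨i - m + 1, hwlt⟩ : Fin n) m) F
      = coeff (gv n (k - m) (i - m)) F := by
  have hm0 : 0 < m := hm.pos
  set dec : ℕ → ℕ := fun u => if u = 0 then n - 1 + (k - i)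
    else if u ≤ i - m then n - u else if u + 1 ≤ i then n - 1 - u else n - 2 - u with hdec
  have h1 : gv n k i - Finsupp.single (⟨i - m + 1, hwlt⟩ : Fin n) m
      = insVec n dec (n - 1 - i) (i - m + 1) := by
    ext x
    rw [gv_sub_apply]
    simp only [insVec, fs_apply, Fin.ext_iff, Fin.val_mk, hdec]
    split_ifs <;> first | contradiction | omega
  have h2 : gv n (k - m) (i - m) = insVec n dec (n - 1 - i) i := by
    ext x
    rw [gv_apply]
    simp only [insVec, fs_apply, hdec]
    split_ifs <;> first | contradiction | omega
  have hrot := rot hF dec (n - 1 - i) (m - 1) (i - m + 1) i (by omega) (by omega)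
  rw [h1, h2, hrot]
  have : Even (m - 1) := by
    rcases hm with ⟨t, ht⟩
    exact ⟨t, by omega⟩
  rw [this.neg_one_pow, one_mul]

private lemma Ai_step {F : MvPolynomial (Fin n) ℤ} (hF : Antisym F) {m k i : ℕ}
    (hm : Odd m) (hmk : m < k) (hkn : k ≤ n) (hik : i < k) :
    coeff (gv n k i) (F * psumN n m)
      = (if i + m < k then coeff (gv n (k - m) i) F else 0)
        + (if m ≤ i then coeff (gv n (k - m) (i - m)) F else 0) := by
  have hm0 : 0 < m := hm.pos
  have hn : 0 < n := by omega
  have hwlt : i - m + 1 < n := by omega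
  rw [coeff_mul_psumN]
  have hpt : ∀ v : Fin n,
      (if m ≤ gv n k i v then coeff (gv n k i - Finsupp.single v m) F else 0)
        = (if v = (⟨0, hn⟩ : Fin n) then (if i + m < k then coeff (gv n (k - m) i) F else 0) else 0)
          + (if v = (⟨i - m + 1, hwlt⟩ : Fin n) then (if m ≤ i then coeff (gv n (k - m) (i - m)) F else 0) else 0) := by
    intro v
    rcases eq_or_ne v (⟨0, hn⟩ : Fin n) with rfl | hv0
    · have hvm : (⟨0, hn⟩ : Fin n) ≠ (⟨i - m + 1, hwlt⟩ : Fin n) := by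
        simp [Fin.ext_iff]
      rw [if_pos rfl, if_neg hvm, add_zero, if_pos (gv_v0_le hn hm0 hmk.le hik hkn)]
      by_cases him : i + m < k
      · rw [if_pos him, term_v0_big hn hik hkn him]
      · rw [if_neg him, term_v0_collide hF hn hmk hik hkn (by omega)]
    · have hv1 : 1 ≤ (v : ℕ) := by
        rcases Nat.eq_zero_or_pos (v : ℕ) with h | h
        · exact absurd (Fin.ext h) hv0
        · exact h
      rw [if_neg hv0, zero_add]
      by_cases hvm : v = (⟨i - m + 1, hwlt⟩ : Fin n) ∧ m ≤ i
      · obtain ⟨rfl, hmi⟩ := hvm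
        have hle : m ≤ gv n k i (⟨i - m + 1, hwlt⟩ : Fin n) := by
          rw [gv_apply]
          have : ((⟨i - m + 1, hwlt⟩ : Fin n) : ℕ) = i - m + 1 := rfl
          rw [this]
          split_ifs <;> first | contradiction | omega
        rw [if_pos hle, if_pos rfl, if_pos hmi]
        exact term_mid hF hm hmi hik hkn hwlt
      · have hnot : ¬((v : ℕ) = i - m + 1 ∧ m ≤ i) := by
          intro ⟨h1, h2⟩
          exact hvm ⟨Fin.ext h1, h2⟩
        by_cases hle : m ≤ gv n k i v
        · rw [if_pos hle, term_vanish hF hm0 hik hkn v hv1 hnot hle]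
          by_cases hv2 : v = (⟨i - m + 1, hwlt⟩ : Fin n)
          · rw [if_pos hv2, if_neg (fun h => hvm ⟨hv2, h⟩)]
          · rw [if_neg hv2]
        · rw [if_neg hle]
          by_cases hv2 : v = (⟨i - m + 1, hwlt⟩ : Fin n)
          · rw [if_pos hv2]
            by_cases hmi : m ≤ i
            · exfalso
              apply hle
              rw [gv_apply, hv2]
              have : ((⟨i - m + 1, hwlt⟩ : Fin n) : ℕ) = i - m + 1 := rfl
              rw [this]
              split_ifs <;> first | contradiction | omega
            · rw [if_neg hmi]
          · rw [if_neg hv2]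
  rw [Finset.sum_congr rfl (fun v _ => hpt v), Finset.sum_add_distrib,
    Finset.sum_ite_eq' univ (⟨0, hn⟩ : Fin n), Finset.sum_ite_eq' univ (⟨i - m + 1, hwlt⟩ : Fin n)]
  simp

private lemma Ai_base {F : MvPolynomial (Fin n) ℤ} (hF : Antisym F) {m i : ℕ}
    (hm0 : 0 < m) (hmn : m ≤ n) (him : i < m) :
    coeff (gv n m i) (F * psumN n m) = (-1 : ℤ)^i * coeff (gv n 0 0) F := by
  have hn : 0 < n := by omega
  rw [coeff_mul_psumN]
  have hpt : ∀ v : Fin n,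
      (if m ≤ gv n m i v then coeff (gv n m i - Finsupp.single v m) F else 0)
        = (if v = (⟨0, hn⟩ : Fin n) then (-1 : ℤ)^i * coeff (gv n 0 0) F else 0) := by
    intro v
    rcases eq_or_ne v (⟨0, hn⟩ : Fin n) with rfl | hv0
    · rw [if_pos rfl, if_pos (gv_v0_le hn hm0 le_rfl him hmn)]
      exact term_v0_base hF hn him hmn
    · have hv1 : 1 ≤ (v : ℕ) := by
        rcases Nat.eq_zero_or_pos (v : ℕ) with h | h
        · exact absurd (Fin.ext h) hv0
        · exact h
      rw [if_neg hv0]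
      by_cases hle : m ≤ gv n m i v
      · rw [if_pos hle, term_vanish hF hm0 him hmn v hv1 (by omega) hle]
      · rw [if_neg hle]
  rw [Finset.sum_congr rfl (fun v _ => hpt v), Finset.sum_ite_eq' univ (⟨0, hn⟩ : Fin n)]
  simp

private lemma step_sum {F : MvPolynomial (Fin n) ℤ} (hF : Antisym F) {m k : ℕ}
    (hm : Odd m) (hmk : m < k) (hkn : k ≤ n) :
    ∑ i ∈ range k, coeff (gv n k i) (F * psumN n m)
      = 2 * ∑ i ∈ range (k - m), coeff (gv n (k - m) i) F := by
  rw [Finset.sum_congr rfl (fun i hi => Ai_step hF hm hmk hkn (mem_range.mp hi)),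
    Finset.sum_add_distrib]
  have h1 : ∑ i ∈ range k, (if i + m < k then coeff (gv n (k - m) i) F else 0)
      = ∑ i ∈ range (k - m), coeff (gv n (k - m) i) F := by
    rw [Finset.sum_ite, Finset.sum_const_zero, add_zero]
    apply Finset.sum_congr
    · ext i
      simp only [mem_filter, mem_range]
      omega
    · intros; rfl
  have h2 : ∑ i ∈ range k, (if m ≤ i then coeff (gv n (k - m) (i - m)) F else 0)
      = ∑ i ∈ range (k - m), coeff (gv n (k - m) i) F := by
    rw [Finset.sum_ite, Finset.sum_const_zero, add_zero]
    have hf : filter (fun i => m ≤ i) (range k) = Ico m k := by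
      ext i
      simp only [mem_filter, mem_range, mem_Ico]
      omega
    rw [hf, Finset.sum_Ico_eq_sum_range]
    apply Finset.sum_congr rfl
    intro i _
    have he : m + i - m = i := by omega
    rw [he]
  rw [h1, h2]
  ring

private lemma base_sum {F : MvPolynomial (Fin n) ℤ} (hF : Antisym F) {m : ℕ}
    (hm : Odd m) (hmn : m ≤ n) :
    ∑ i ∈ range m, coeff (gv n m i) (F * psumN n m) = coeff (gv n 0 0) F := by
  rw [Finset.sum_congr rfl (fun i hi => Ai_base hF hm.pos hmn (mem_range.mp hi)),
    ← Finset.sum_mul, neg_one_geom_sum, if_neg (by simpa using Nat.not_even_iff_odd.mpr hm)]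
  ring

private lemma key : ∀ (μ : Multiset ℕ), μ ≠ 0 → (∀ m ∈ μ, Odd m) → μ.sum ≤ n →
    ∑ i ∈ range μ.sum, coeff (gv n μ.sum i) (vandermondePoly n * powerSumProd n μ)
      = 2^(Multiset.card μ - 1) * coeff (gv n 0 0) (vandermondePoly n) := by
  intro μ
  induction μ using Multiset.induction_on with
  | empty => intro h; exact absurd rfl h
  | cons a s ih =>
    intro _ hodd hsum
    have hodda : Odd a := hodd a (Multiset.mem_cons_self a s)
    have hsodd : ∀ m ∈ s, Odd m := fun m hm => hodd m (Multiset.mem_cons_of_mem hm)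
    have hsumc : (a ::ₘ s).sum = a + s.sum := Multiset.sum_cons a s
    rw [hsumc] at hsum
    have hPmul : vandermondePoly n * powerSumProd n (a ::ₘ s)
        = (vandermondePoly n * powerSumProd n s) * psumN n a := by
      rw [powerSumProd, Multiset.map_cons, Multiset.prod_cons, powerSumProd]
      rw [show (∑ i : Fin n, (X i : MvPolynomial (Fin n) ℤ) ^ a) = psumN n a from rfl]
      ring
    have hF : Antisym (vandermondePoly n * powerSumProd n s) :=
      antisym_mul antisym_vand (fun σ => rename_powerSumProd s σ)
    rcases eq_or_ne s 0 with rfl | hsne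
    · simp only [Multiset.sum_cons, Multiset.sum_zero, add_zero] at hsum ⊢
      rw [hPmul, base_sum hF hodda hsum]
      have hP0 : powerSumProd n 0 = 1 := by simp [powerSumProd]
      rw [hP0, mul_one]
      simp
    · have hs0 : 0 < s.sum := by
        obtain ⟨x, hx⟩ := Multiset.exists_mem_of_ne_zero hsne
        have hx1 : 1 ≤ x := (hsodd x hx).pos
        have hxs : x ≤ s.sum := Multiset.single_le_sum (fun y _ => Nat.zero_le y) x hx
        omega
      simp only [hsumc]
      rw [hPmul, step_sum hF hodda (by omega) (by omega)]
      have hred : a + s.sum - a = s.sum := by omega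
      rw [hred, ih hsne hsodd (by omega)]
      have hc : Multiset.card (a ::ₘ s) = Multiset.card s + 1 := by simp
      have hcs : 0 < Multiset.card s := Multiset.card_pos.mpr hsne
      rw [hc]
      have h1 : Multiset.card s + 1 - 1 = Multiset.card s := by omega
      rw [h1]
      have h2 : (2:ℤ)^(Multiset.card s) = 2 * 2^(Multiset.card s - 1) := by
        conv_lhs => rw [show Multiset.card s = (Multiset.card s - 1) + 1 by omega]
        ring
      rw [h2]
      ring

private lemma card_filter_fst (x : Fin n) :
    ((univ.filter (fun p : Fin n × Fin n => p.1 < p.2)).filter (fun p => p.1 = x)).card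
      = n - 1 - (x : ℕ) := by
  have hset : (univ.filter (fun p : Fin n × Fin n => p.1 < p.2)).filter (fun p => p.1 = x)
      = (Ioi x).map ⟨fun j => (x, j), fun a b h => by simpa using congrArg Prod.snd h⟩ := by
    ext q
    simp only [mem_filter, mem_map, mem_univ, true_and, mem_Ioi, Function.Embedding.coeFn_mk]
    constructor
    · rintro ⟨h1, h2⟩
      exact ⟨q.2, by rw [← h2]; exact h1, by rw [← h2]; rfl⟩
    · rintro ⟨j, hj, rfl⟩
      exact ⟨hj, rfl⟩
  rw [hset, Finset.card_map, Fin.card_Ioi]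

private lemma coeff_delta_vand :
    coeff (gv n 0 0) (vandermondePoly n) = 1 := by
  classical
  set S : Finset (Fin n × Fin n) := univ.filter (fun p => p.1 < p.2) with hS
  have h1 : vandermondePoly n = ∏ p ∈ S, (X p.1 - X p.2) := by
    rw [hS, Finset.prod_filter, vandermondePoly, ← Fintype.prod_prod_type']
  set D : Finset (Fin n × Fin n) → (Fin n →₀ ℕ) :=
    fun t => (∑ p ∈ t, Finsupp.single p.1 1) + ∑ p ∈ S \ t, Finsupp.single p.2 1 with hD
  have h2 : vandermondePoly n
      = ∑ t ∈ S.powerset, monomial (D t) ((-1 : ℤ) ^ (S \ t).card) := by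
    rw [h1]
    have hsub : ∀ p : Fin n × Fin n, (X p.1 - X p.2 : MvPolynomial (Fin n) ℤ)
        = X p.1 + (- X p.2) := fun p => by ring
    rw [Finset.prod_congr rfl (fun p _ => hsub p), Finset.prod_add]
    apply Finset.sum_congr rfl
    intro t ht
    have ha : (∏ p ∈ t, (X p.1 : MvPolynomial (Fin n) ℤ))
        = monomial (∑ p ∈ t, Finsupp.single p.1 1) 1 := by
      rw [monomial_sum_one]
      apply Finset.prod_congr rfl
      intro p _
      rw [← MvPolynomial.X_pow_eq_monomial, pow_one]
    have hb : (∏ p ∈ S \ t, (-X p.2 : MvPolynomial (Fin n) ℤ))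
        = C ((-1 : ℤ) ^ (S \ t).card) * monomial (∑ p ∈ S \ t, Finsupp.single p.2 1) 1 := by
      rw [monomial_sum_one, map_pow, map_neg, map_one, ← Finset.prod_const,
        ← Finset.prod_mul_distrib]
      apply Finset.prod_congr rfl
      intro p _
      rw [← MvPolynomial.X_pow_eq_monomial, pow_one]
      ring
    rw [ha, hb]
    rw [show (monomial (∑ p ∈ t, Finsupp.single p.1 1) (1:ℤ)) *
        (C ((-1 : ℤ) ^ (S \ t).card) * monomial (∑ p ∈ S \ t, Finsupp.single p.2 1) 1)
      = C ((-1 : ℤ) ^ (S \ t).card) *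
        ((monomial (∑ p ∈ t, Finsupp.single p.1 1) (1:ℤ)) *
          monomial (∑ p ∈ S \ t, Finsupp.single p.2 1) 1) from by ring]
    rw [MvPolynomial.monomial_mul, MvPolynomial.C_mul_monomial]
    simp [hD]
  have hDapp : ∀ (t : Finset (Fin n × Fin n)) (x : Fin n),
      D t x = (t.filter (fun p => p.1 = x)).card + ((S \ t).filter (fun p => p.2 = x)).card := by
    intro t x
    rw [hD]
    simp only [Finsupp.add_apply, Finsupp.finset_sum_apply, Finsupp.single_apply]
    congr 1
    · rw [Finset.card_filter]
    · rw [Finset.card_filter]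
  have huniq : ∀ t ∈ S.powerset, D t = gv n 0 0 → t = S := by
    intro t ht hDt
    rw [Finset.mem_powerset] at ht
    have main : ∀ N : ℕ, ∀ p : Fin n × Fin n, p ∈ S → (p.1 : ℕ) = N → p ∈ t := by
      intro N
      induction N using Nat.strong_induction_on with
      | _ N ihN =>
        intro p hp hpN
        set x := p.1 with hx
        have hc2 : ((S \ t).filter (fun q => q.2 = x)).card = 0 := by
          rw [Finset.card_eq_zero, Finset.filter_eq_empty_iff]
          intro q hq
          rw [Finset.mem_sdiff] at hq
          intro hq2
          have hqS := hq.1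
          have hqlt : q.1 < q.2 := by
            have h' := hqS
            rw [hS, Finset.mem_filter] at h'
            exact h'.2
          have : q ∈ t := by
            apply ihN (q.1 : ℕ) ?_ q hqS rfl
            rw [← hpN, hx]
            rw [hq2] at hqlt
            exact hqlt
          exact hq.2 this
        have hval : D t x = n - 1 - (x : ℕ) := by
          rw [hDt, gv_apply]
          split_ifs <;> first | contradiction | omega
        rw [hDapp, hc2, add_zero] at hval
        have hsub2 : t.filter (fun q => q.1 = x) ⊆ S.filter (fun q => q.1 = x) :=
          Finset.filter_subset_filter _ ht
        have hcards : (S.filter (fun q => q.1 = x)).card ≤ (t.filter (fun q => q.1 = x)).card := by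
          rw [hval, hS, card_filter_fst]
        have heq : t.filter (fun q => q.1 = x) = S.filter (fun q => q.1 = x) :=
          Finset.eq_of_subset_of_card_le hsub2 hcards
        have hmem : p ∈ S.filter (fun q => q.1 = x) := by
          rw [Finset.mem_filter]
          exact ⟨hp, rfl⟩
        rw [← heq, Finset.mem_filter] at hmem
        exact hmem.1
    apply Finset.Subset.antisymm ht
    intro p hp
    exact main (p.1 : ℕ) p hp rfl
  have hDS : D S = gv n 0 0 := by
    ext x
    rw [hDapp, gv_apply]
    rw [Finset.sdiff_self, Finset.filter_empty, Finset.card_empty, add_zero, hS,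
      card_filter_fst]
    have hxn := x.isLt
    split_ifs <;> first | contradiction | omega
  rw [h2, MvPolynomial.coeff_sum]
  rw [Finset.sum_eq_single_of_mem S (Finset.mem_powerset_self S)]
  · rw [MvPolynomial.coeff_monomial, if_pos hDS, Finset.sdiff_self, Finset.card_empty, pow_zero]
  · intro t ht hts
    rw [MvPolynomial.coeff_monomial]
    rw [if_neg]
    intro hDt
    exact hts (huniq t ht hDt)

private lemma sorted_replicate (i : ℕ) : List.Pairwise (· ≥ ·) (List.replicate i (1:ℕ)) := by
  induction i with
  | zero => simp
  | succ k ih =>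
    rw [List.replicate_succ, List.pairwise_cons]
    refine ⟨fun b hb => ?_, ih⟩
    rw [List.eq_of_mem_replicate hb]

private lemma partNth_hook {i : ℕ} (hin : i < n) (v : ℕ) :
    partNth ((n - i) ::ₘ Multiset.replicate i 1) v
      = if v = 0 then n - i else if v ≤ i then 1 else 0 := by
  have hsort : Multiset.sort ((n - i) ::ₘ Multiset.replicate i 1) (· ≥ ·)
      = (n - i) :: List.replicate i 1 := by
    refine (fun hp h1 h2 => List.Perm.eq_of_pairwise' (r := (· ≥ ·)) h1 h2 hp) ?_ ?_ ?_
    · apply Multiset.coe_eq_coe.mp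
      rw [Multiset.sort_eq]
      rw [← Multiset.cons_coe, Multiset.coe_replicate]
    · exact Multiset.pairwise_sort _ _
    · rw [List.pairwise_cons]
      refine ⟨fun b hb => ?_, sorted_replicate i⟩
      have := List.eq_of_mem_replicate hb
      omega
  rw [partNth, hsort]
  cases v with
  | zero => simp
  | succ u =>
    rw [List.getD_cons_succ]
    rw [List.getD_eq_getElem?_getD, List.getElem?_replicate]
    split_ifs <;> first | rfl | contradiction | omega | simp

private lemma hook_index {i : ℕ} (hin : i < n) :
    (Finsupp.equivFunOnFinite.symm fun v : Fin n =>
        partNth ((n - i) ::ₘ Multiset.replicate i 1) v.val + (n - 1 - v.val))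
      = gv n n i := by
  ext x
  have h1 : (Finsupp.equivFunOnFinite.symm fun v : Fin n =>
      partNth ((n - i) ::ₘ Multiset.replicate i 1) v.val + (n - 1 - v.val)) x
      = partNth ((n - i) ::ₘ Multiset.replicate i 1) x.val + (n - 1 - x.val) :=
    rfl
  rw [h1, gv_apply, partNth_hook hin]
  split_ifs <;> omega

end Work

/-- if all parts of `μ ⊢ n` are odd, then
`Σ_{i=0}^{n-1} χ^{(n-i,1^i)}(μ) = 2^{ℓ(μ)-1}`. -/
theorem hook_char_sum_odd (n : ℕ) (hn : 0 < n) (mu : n.Partition)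
    (hodd : ∀ m ∈ mu.parts, Odd m) :
    ∑ i : Fin n, chi n (hookPartition n i i.isLt) mu = 2 ^ (Multiset.card mu.parts - 1) := by
  classical
  have hsum : mu.parts.sum = n := mu.parts_sum
  have hne : mu.parts ≠ 0 := by
    intro h
    rw [h] at hsum
    simp at hsum
    omega
  have hkey := key mu.parts hne hodd (le_of_eq hsum)
  rw [hsum] at hkey
  have hchi : ∀ i : Fin n, chi n (hookPartition n i i.isLt) mu
      = MvPolynomial.coeff (gv n n (i : ℕ)) (vandermondePoly n * powerSumProd n mu.parts) := by
    intro i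
    rw [chi]
    congr 1
    exact hook_index i.isLt
  rw [Finset.sum_congr rfl (fun i _ => hchi i)]
  rw [show (∑ i : Fin n, MvPolynomial.coeff (gv n n (i : ℕ))
        (vandermondePoly n * powerSumProd n mu.parts))
      = ∑ i ∈ Finset.range n, MvPolynomial.coeff (gv n n i)
        (vandermondePoly n * powerSumProd n mu.parts) from
    Fin.sum_univ_eq_sum_range (fun j => MvPolynomial.coeff (gv n n j)
      (vandermondePoly n * powerSumProd n mu.parts)) n]
  rw [hkey, coeff_delta_vand]
  ring
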